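/- Let f : ZMod 4 → Fin 3 be a cyclic word containing the colors b and p each exactly twice and the color r not at all. Then f can be extended, by inserting two new elements of color r (at arbitrary, not necessarily adjacent, gaps), to a cyclic word of length 6 satisfying the K3-constraint if and only if the colors b and p alternate in f, i.e., f(i+2) = f(i) for all i in ZMod 4. -/

import Mathlib

namespace SATR

def red : Fin 3 := 0
def blue : Fin 3 := 1
def purple : Fin 3 := 2

/-- `x` lies strictly inside the cyclic arc from `a` to `c` (in the `+1` direction). -/
def arcBetween {n : ℕ} [NeZero n] (a x c : ZMod n) : Prop :=
  0 < (x - a).val ∧ (x - a).val < (c - a).val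

/-- Colors `c` and `c'` alternate in the cyclic word `f`: there are two positions of
color `c` such that each of the two open cyclic arcs they determine contains a
position of color `c'`. -/
def Alternates {n : ℕ} [NeZero n] (f : ZMod n → Fin 3) (c c' : Fin 3) : Prop :=
  ∃ i1 i2 j1 j2 : ZMod n, f i1 = c ∧ f i2 = c ∧ i1 ≠ i2 ∧
    f j1 = c' ∧ f j2 = c' ∧ arcBetween i1 j1 i2 ∧ arcBetween i2 j2 i1

/-- The K3-constraint: all three pairs of distinct colors alternate. -/
def K3Constraint (w : ZMod 6 → Fin 3) : Prop :=
  Alternates w red blue ∧ Alternates w red purple ∧ Alternates w blue purple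

/-- The P3-constraint: r–p and b–p alternate, r–b do not. -/
def P3Constraint (w : ZMod 6 → Fin 3) : Prop :=
  Alternates w red purple ∧ Alternates w blue purple ∧ ¬ Alternates w red blue

/-- Number of occurrences of color `c` in the cyclic word `f`. -/
def count {n : ℕ} [NeZero n] (f : ZMod n → Fin 3) (c : Fin 3) : ℕ :=
  (Finset.univ.filter fun i => f i = c).card

/-- Insert a new element of color `c` into the gap right after position `g`. -/
def insertAt {n : ℕ} [NeZero n] (f : ZMod n → Fin 3) (g : ZMod n) (c : Fin 3) :
    ZMod (n + 1) → Fin 3 :=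
  fun j =>
    if j.val = g.val + 1 then c
    else if j.val ≤ g.val then f (j.val : ZMod n)
    else f ((j.val - 1 : ℕ) : ZMod n)

/-- Insert `c1` right after position `g`, and `c2` immediately (cyclically) after `c1`,
so the two new elements are cyclically consecutive. -/
def insertPair {n : ℕ} [NeZero n] (f : ZMod n → Fin 3) (g : ZMod n) (c1 c2 : Fin 3) :
    ZMod (n + 2) → Fin 3 :=
  insertAt (insertAt f g c1) ((g.val + 1 : ℕ) : ZMod (n + 1)) c2

/-- The cyclic distance between two positions: the minimum of the two arc lengths. -/
def cycDist {n : ℕ} [NeZero n] (i j : ZMod n) : ℕ :=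
  min (j - i).val (i - j).val

/-! Deleting letters from a cyclic word keeps the remaining ones in the same cyclic order, so if
blue and purple alternate after two reds have been inserted into `f`, they already alternate in
`f`. In a cyclic word of length 4, two alternating colors occupy the positions `a, a + 2` and
`a + 1, a + 3`, which forces `f (i + 2) = f i`. Conversely, if `f` is `bpbp` up to rotation and
swapping the two colors, inserting the reds as `b r p b r p` makes all three pairs alternate. -/

instance {n : ℕ} [NeZero n] (a x c : ZMod n) : Decidable (arcBetween a x c) := by
  unfold arcBetween; infer_instance

instance {n : ℕ} [NeZero n] (f : ZMod n → Fin 3) (c c' : Fin 3) :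
    Decidable (Alternates f c c') := by
  unfold Alternates; infer_instance

instance (w : ZMod 6 → Fin 3) : Decidable (K3Constraint w) := by
  unfold K3Constraint; infer_instance

theorem _root_.ZMod.val_sub_of_lt {n : ℕ} [NeZero n] {a b : ZMod n} (h : a.val < b.val) :
    (a - b).val = n + a.val - b.val := by
  have hba : b - a ≠ 0 := by
    intro h0
    have := ZMod.val_sub h.le
    rw [h0, ZMod.val_zero] at this
    omega
  rw [← neg_sub, ZMod.neg_val, if_neg hba, ZMod.val_sub h.le]
  have := ZMod.val_lt b
  omega

theorem arcBetween_iff {n : ℕ} [NeZero n] (a x c : ZMod n) :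
    arcBetween a x c ↔ a.val < x.val ∧ x.val < c.val ∨ x.val < c.val ∧ c.val < a.val ∨
      c.val < a.val ∧ a.val < x.val := by
  have ha := ZMod.val_lt a
  have hx := ZMod.val_lt x
  have hc := ZMod.val_lt c
  unfold arcBetween
  rcases lt_or_ge x.val a.val with hxa | hxa <;> rcases lt_or_ge c.val a.val with hca | hca <;>
    simp only [ZMod.val_sub_of_lt, ZMod.val_sub, hxa, hca, and_true, true_and] <;> omega

theorem arcBetween_map_iff {m n : ℕ} [NeZero m] [NeZero n] {e : ZMod m → ZMod n}
    (he : ∀ i j, (e i).val < (e j).val ↔ i.val < j.val) (a x c : ZMod m) :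
    arcBetween (e a) (e x) (e c) ↔ arcBetween a x c := by
  simp only [arcBetween_iff, he]

theorem Alternates.of_comp {m n : ℕ} [NeZero m] [NeZero n] {f : ZMod m → Fin 3}
    {w : ZMod n → Fin 3} {e : ZMod m → ZMod n} {c c' : Fin 3}
    (he : ∀ i j, (e i).val < (e j).val ↔ i.val < j.val) (hwe : ∀ i, w (e i) = f i)
    (hcolor : ∀ j, w j = c ∨ w j = c' → ∃ i, e i = j) (h : Alternates w c c') :
    Alternates f c c' := by
  obtain ⟨i1, i2, j1, j2, hi1, hi2, hne, hj1, hj2, harc1, harc2⟩ := h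
  obtain ⟨i1, rfl⟩ := hcolor i1 (.inl hi1)
  obtain ⟨i2, rfl⟩ := hcolor i2 (.inl hi2)
  obtain ⟨j1, rfl⟩ := hcolor j1 (.inr hj1)
  obtain ⟨j2, rfl⟩ := hcolor j2 (.inr hj2)
  rw [hwe] at hi1 hi2 hj1 hj2
  rw [arcBetween_map_iff he] at harc1 harc2
  exact ⟨i1, i2, j1, j2, hi1, hi2, ne_of_apply_ne e hne, hj1, hj2, harc1, harc2⟩

def skipAfter {n : ℕ} (g i : ZMod n) : ZMod (n + 1) :=
  ((if i.val ≤ g.val then i.val else i.val + 1 : ℕ) : ZMod (n + 1))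

theorem val_skipAfter {n : ℕ} [NeZero n] (g i : ZMod n) :
    (skipAfter g i).val = if i.val ≤ g.val then i.val else i.val + 1 := by
  have := ZMod.val_lt i
  unfold skipAfter
  rw [ZMod.val_natCast_of_lt]
  split_ifs <;> omega

theorem val_skipAfter_lt_iff {n : ℕ} [NeZero n] (g i j : ZMod n) :
    (skipAfter g i).val < (skipAfter g j).val ↔ i.val < j.val := by
  simp only [val_skipAfter]
  split_ifs <;> omega

theorem insertAt_skipAfter {n : ℕ} [NeZero n] (f : ZMod n → Fin 3) (g : ZMod n) (c : Fin 3)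
    (i : ZMod n) : insertAt f g c (skipAfter g i) = f i := by
  unfold insertAt
  rw [val_skipAfter]
  split_ifs <;> first | omega | simp

theorem exists_skipAfter_eq {n : ℕ} [NeZero n] {g : ZMod n} {j : ZMod (n + 1)}
    (hj : j.val ≠ g.val + 1) : ∃ i, skipAfter g i = j := by
  have hg := ZMod.val_lt g
  have hjn := ZMod.val_lt j
  rcases le_or_gt j.val g.val with hjg | hjg
  · refine ⟨(j.val : ZMod n), ZMod.val_injective _ ?_⟩
    rw [val_skipAfter, ZMod.val_natCast_of_lt (by omega), if_pos hjg]
  · refine ⟨((j.val - 1 : ℕ) : ZMod n), ZMod.val_injective _ ?_⟩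
    rw [val_skipAfter, ZMod.val_natCast_of_lt (by omega), if_neg (by omega)]
    omega

theorem Alternates.of_insertAt {n : ℕ} [NeZero n] {f : ZMod n → Fin 3} {g : ZMod n}
    {c c₁ c₂ : Fin 3} (hc₁ : c ≠ c₁) (hc₂ : c ≠ c₂)
    (h : Alternates (insertAt f g c) c₁ c₂) : Alternates f c₁ c₂ := by
  refine h.of_comp (val_skipAfter_lt_iff g) (insertAt_skipAfter f g c) fun j hj => ?_
  refine exists_skipAfter_eq fun hjg => ?_
  simp only [insertAt, if_pos hjg] at hj
  tauto

theorem eq_of_arcBetween_zmod4 {a b x y : ZMod 4} (hx : arcBetween a x b)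
    (hy : arcBetween b y a) : b = a + 2 ∧ x = a + 1 ∧ y = a + 3 := by
  revert a b x y
  decide

theorem Alternates.periodic_of_zmod4 {f : ZMod 4 → Fin 3} {c c' : Fin 3}
    (h : Alternates f c c') (i : ZMod 4) : f (i + 2) = f i := by
  obtain ⟨a, b, x, y, ha, hb, -, hx, hy, hax, hby⟩ := h
  obtain ⟨rfl, rfl, rfl⟩ := eq_of_arcBetween_zmod4 hax hby
  obtain ⟨k, rfl⟩ : ∃ k, i = a + k := ⟨i - a, by ring⟩
  obtain rfl | rfl | rfl | rfl : k = 0 ∨ k = 1 ∨ k = 2 ∨ k = 3 := by revert k; decide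
  · rw [add_zero, ha, hb]
  · rw [show a + 1 + 2 = a + 3 by ring, hx, hy]
  · rw [show a + 2 + 2 = a by grind, ha, hb]
  · rw [show a + 3 + 2 = a + 1 by grind, hx, hy]

theorem k3Constraint_insertAt_insertAt_red (f : ZMod 4 → Fin 3) (hb : count f blue = 2)
    (hp : count f purple = 2) (hf : ∀ i : ZMod 4, f (i + 2) = f i) :
    K3Constraint (insertAt (insertAt f 0 red) 3 red) := by
  revert f
  decide +kernel

theorem k3_minus_r_r_iff_alternating_general
    (f : ZMod 4 → Fin 3)
    (hb : count f blue = 2) (hp : count f purple = 2) :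
    (∃ (g1 : ZMod 4) (g2 : ZMod 5),
        K3Constraint (insertAt (insertAt f g1 red) g2 red)) ↔
      (∀ i : ZMod 4, f (i + 2) = f i) := by
  have hred_blue : red ≠ blue := by decide
  have hred_purple : red ≠ purple := by decide
  constructor
  · rintro ⟨g1, g2, -, -, hbp⟩
    exact (hbp.of_insertAt hred_blue hred_purple |>.of_insertAt hred_blue hred_purple)
      |>.periodic_of_zmod4
  · exact fun hf => ⟨0, 3, k3Constraint_insertAt_insertAt_red f hb hp hf⟩

/-- The K3^{-r,r}-constraint: a length-4 cyclic word with two blues and two purples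
(and no red) can be extended to a K3-satisfying length-6 word by inserting two new
reds at arbitrary gaps iff blue and purple alternate, i.e. `f (i+2) = f i`. -/
theorem k3_minus_r_r_iff_alternating
    (f : ZMod 4 → Fin 3)
    (hb : count f blue = 2) (hp : count f purple = 2) (hr : count f red = 0) :
    (∃ (g1 : ZMod 4) (g2 : ZMod 5),
        K3Constraint (insertAt (insertAt f g1 red) g2 red)) ↔
      (∀ i : ZMod 4, f (i + 2) = f i) :=
  k3_minus_r_r_iff_alternating_general f hb hp

end SATR
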